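/- Let n ≥ 4 be even, α > 0, and q_1 > q_2 > … > q_n real numbers. Let Q be the n×n skew-symmetric matrix with Q_{ij} = q_{ij}|q_{ij}|^{−α−2}, and for 1 ≤ i < j ≤ n−1 define Q̃_{ij} = (q_{jn}^{−1} − q_{in}^{−1})^{−α−1}, yielding an (n−1)×(n−1) skew-symmetric matrix Q̃. Then: (1) Pf Q = (∏_{j=1}^{n−1} Q_{jn}) · Pf(B(Q̃)), where B(Q̃) is the bordered n×n skew-symmetric matrix of Q̃; and (2) the numbers q̃_j := −q_{jn}^{−1} for j = 1, …, n−1 satisfy q̃_1 > q̃_2 > … > q̃_{n−1}, and Q̃_{ij} = q̃_{ij}|q̃_{ij}|^{−α−2} with q̃_{ij} = q̃_i − q̃_j. -/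
import Mathlib
open scoped BigOperators

noncomputable def Pf {n : ℕ} (A : Matrix (Fin n) (Fin n) ℝ) : ℝ :=
  (1 / (2 ^ (n / 2) * (Nat.factorial (n / 2)) : ℝ)) *
    ∑ σ : Equiv.Perm (Fin n), ((Equiv.Perm.sign σ : ℤ) : ℝ) *
      ∏ i : Fin (n / 2),
        A (σ ⟨2 * i.val, by have := i.isLt; omega⟩)
          (σ ⟨2 * i.val + 1, by have := i.isLt; omega⟩)

lemma prod_range_pair (k : ℕ) (g : ℕ → ℝ) :
    ∏ t ∈ Finset.range (2 * k), g t
      = ∏ i ∈ Finset.range k, (g (2 * i) * g (2 * i + 1)) := by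
  induction k with
  | zero => simp
  | succ k ih =>
    have h : 2 * (k + 1) = (2 * k + 1) + 1 := by ring
    rw [h, Finset.prod_range_succ, Finset.prod_range_succ, ih,
      Finset.prod_range_succ]
    ring

lemma prod_pairs {m : ℕ} (hm : Even m) (g : Fin m → ℝ) :
    (∏ i : Fin (m / 2),
        (g ⟨2 * i.val, by have := i.isLt; omega⟩ *
         g ⟨2 * i.val + 1, by have := i.isLt; omega⟩))
      = ∏ j : Fin m, g j := by
  obtain ⟨k, hk⟩ := hm
  have hm2 : m = 2 * k := by omega
  have hdiv : m / 2 = k := by omega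
  set g' : ℕ → ℝ := fun t => if h : t < m then g ⟨t, h⟩ else 1 with hg'
  have h1 : ∀ (t : ℕ) (h : t < m), g ⟨t, h⟩ = g' t := by
    intro t h; simp [hg', dif_pos h]
  have h2 : ∏ j : Fin m, g j = ∏ t ∈ Finset.range m, g' t := by
    rw [← Fin.prod_univ_eq_prod_range g' m]
    exact Finset.prod_congr rfl fun j _ => by
      rw [← h1 j.val j.isLt]
  have h3 : (∏ i : Fin (m / 2),
        (g ⟨2 * i.val, by have := i.isLt; omega⟩ *
         g ⟨2 * i.val + 1, by have := i.isLt; omega⟩))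
      = ∏ i : Fin (m / 2), (g' (2 * i.val) * g' (2 * i.val + 1)) := by
    refine Finset.prod_congr rfl fun i _ => ?_
    rw [h1 (2 * i.val) (by have := i.isLt; omega),
        h1 (2 * i.val + 1) (by have := i.isLt; omega)]
  rw [h3, h2, Fin.prod_univ_eq_prod_range (fun t => g' (2 * t) * g' (2 * t + 1)) (m / 2),
    hdiv, hm2, prod_range_pair]

lemma Pf_diag {m : ℕ} (hm : Even m) (d : Fin m → ℝ)
    (A B : Matrix (Fin m) (Fin m) ℝ)
    (h : ∀ i j, A i j = d i * d j * B i j) :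
    Pf A = (∏ i, d i) * Pf B := by
  unfold Pf
  have key : ∀ σ : Equiv.Perm (Fin m),
      (∏ i : Fin (m / 2),
        A (σ ⟨2 * i.val, by have := i.isLt; omega⟩)
          (σ ⟨2 * i.val + 1, by have := i.isLt; omega⟩))
      = (∏ j, d j) *
        ∏ i : Fin (m / 2),
          B (σ ⟨2 * i.val, by have := i.isLt; omega⟩)
            (σ ⟨2 * i.val + 1, by have := i.isLt; omega⟩) := by
    intro σ
    have e1 : (∏ i : Fin (m / 2),
        A (σ ⟨2 * i.val, by have := i.isLt; omega⟩)
          (σ ⟨2 * i.val + 1, by have := i.isLt; omega⟩))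
        = ∏ i : Fin (m / 2),
          ((d (σ ⟨2 * i.val, by have := i.isLt; omega⟩) *
            d (σ ⟨2 * i.val + 1, by have := i.isLt; omega⟩)) *
           B (σ ⟨2 * i.val, by have := i.isLt; omega⟩)
             (σ ⟨2 * i.val + 1, by have := i.isLt; omega⟩)) :=
      Finset.prod_congr rfl fun i _ => h _ _
    rw [e1, Finset.prod_mul_distrib]
    congr 1
    have := prod_pairs hm (fun j => d (σ j))
    simpa using this.trans (Equiv.prod_comp σ d)
  have e2 : (∑ σ : Equiv.Perm (Fin m), ((Equiv.Perm.sign σ : ℤ) : ℝ) *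
      ∏ i : Fin (m / 2),
        A (σ ⟨2 * i.val, by have := i.isLt; omega⟩)
          (σ ⟨2 * i.val + 1, by have := i.isLt; omega⟩))
      = (∏ j, d j) * ∑ σ : Equiv.Perm (Fin m), ((Equiv.Perm.sign σ : ℤ) : ℝ) *
      ∏ i : Fin (m / 2),
        B (σ ⟨2 * i.val, by have := i.isLt; omega⟩)
          (σ ⟨2 * i.val + 1, by have := i.isLt; omega⟩) := by
    rw [Finset.mul_sum]
    exact Finset.sum_congr rfl fun σ _ => by rw [key σ]; ring
  rw [e2]; ring

lemma Pf_cast {m m' : ℕ} (h : m = m') (A : Matrix (Fin m') (Fin m') ℝ)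
    (B : Matrix (Fin m) (Fin m) ℝ)
    (hB : ∀ i j : Fin m, B i j = A (Fin.cast h i) (Fin.cast h j)) :
    Pf B = Pf A := by
  subst h
  have : B = A := by funext i j; simpa using hB i j
  rw [this]

def border {m : ℕ} (A : Matrix (Fin m) (Fin m) ℝ) :
    Matrix (Fin (m + 1)) (Fin (m + 1)) ℝ := fun i j =>
  if hi : (i : ℕ) < m then
    if hj : (j : ℕ) < m then A ⟨i, hi⟩ ⟨j, hj⟩ else 1
  else if (j : ℕ) < m then -1 else 0

theorem stmt5 (n : ℕ) (hn : 4 ≤ n) (hne : Even n) (α : ℝ) (hα : 0 < α)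
    (q : Fin n → ℝ) (hq : StrictAnti q)
    (Q : Matrix (Fin n) (Fin n) ℝ)
    (hQ : ∀ i j, Q i j = (q i - q j) * |q i - q j| ^ (-α - 2))
    (qt : Fin (n - 1) → ℝ)
    (hqt : ∀ j : Fin (n - 1),
      qt j = -(q ⟨j, by have := j.isLt; omega⟩ - q ⟨n - 1, by omega⟩)⁻¹)
    (Qt : Matrix (Fin (n - 1)) (Fin (n - 1)) ℝ)
    (hQt : ∀ i j : Fin (n - 1), Qt i j =
      ((q ⟨j, by have := j.isLt; omega⟩ - q ⟨n - 1, by omega⟩)⁻¹ -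
        (q ⟨i, by have := i.isLt; omega⟩ - q ⟨n - 1, by omega⟩)⁻¹) *
      |(q ⟨j, by have := j.isLt; omega⟩ - q ⟨n - 1, by omega⟩)⁻¹ -
        (q ⟨i, by have := i.isLt; omega⟩ - q ⟨n - 1, by omega⟩)⁻¹| ^ (-α - 2)) :
    Pf Q = (∏ j : Fin (n - 1),
        Q ⟨j, by have := j.isLt; omega⟩ ⟨n - 1, by omega⟩) * Pf (border Qt) ∧
    StrictAnti qt ∧
    (∀ i j : Fin (n - 1), Qt i j = (qt i - qt j) * |qt i - qt j| ^ (-α - 2)) := by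
  have hn1 : n - 1 < n := by omega
  set N : Fin n := ⟨n - 1, hn1⟩ with hN
  have hpos : ∀ i : Fin n, (i : ℕ) < n - 1 → 0 < q i - q N := by
    intro i hi
    have hlt : i < N := by rw [Fin.lt_def]; simpa [hN] using hi
    have := hq hlt
    linarith
  have fmul : ∀ x y : ℝ,
      (x * y) * |x * y| ^ (-α - 2) = (x * |x| ^ (-α - 2)) * (y * |y| ^ (-α - 2)) := by
    intro x y
    rw [abs_mul, Real.mul_rpow (abs_nonneg x) (abs_nonneg y)]
    ring
  -- part 2
  have part2 : StrictAnti qt := by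
    intro i j hij
    rw [hqt i, hqt j]
    have hi : (i : ℕ) < n - 1 := i.isLt
    have hj : (j : ℕ) < n - 1 := j.isLt
    have hAi : 0 < q ⟨i, by omega⟩ - q N := hpos ⟨i, by omega⟩ hi
    have hAj : 0 < q ⟨j, by omega⟩ - q N := hpos ⟨j, by omega⟩ hj
    have hqlt : q ⟨i, by omega⟩ > q ⟨j, by omega⟩ := by
      apply hq
      exact Fin.mk_lt_mk.mpr hij
    have h1 : q ⟨j, by omega⟩ - q N < q ⟨i, by omega⟩ - q N := by linarith
    have h2 : (q ⟨i, by omega⟩ - q N)⁻¹ < (q ⟨j, by omega⟩ - q N)⁻¹ :=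
      inv_strictAnti₀ hAj h1
    simpa [hN] using neg_lt_neg h2
  -- part 3
  have part3 : ∀ i j : Fin (n - 1), Qt i j = (qt i - qt j) * |qt i - qt j| ^ (-α - 2) := by
    intro i j
    rw [hQt i j, hqt i, hqt j]
    have h : -(q ⟨i, by have := i.isLt; omega⟩ - q ⟨n - 1, by omega⟩)⁻¹ -
        -(q ⟨j, by have := j.isLt; omega⟩ - q ⟨n - 1, by omega⟩)⁻¹
        = (q ⟨j, by have := j.isLt; omega⟩ - q ⟨n - 1, by omega⟩)⁻¹ -
          (q ⟨i, by have := i.isLt; omega⟩ - q ⟨n - 1, by omega⟩)⁻¹ := by ring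
    rw [h]
  -- part 1
  have hcast : n = (n - 1) + 1 := by omega
  set d0 : ℕ → ℝ := fun t => if h : t < n - 1 then Q ⟨t, by omega⟩ N else 1 with hd0
  have hd0lt : ∀ (t : ℕ) (h : t < n - 1), d0 t = Q ⟨t, by omega⟩ N := by
    intro t h; simp [hd0, dif_pos h]
  have hd0N : d0 (n - 1) = 1 := by simp [hd0]
  have hpoint : ∀ i j : Fin n,
      Q i j = d0 i.val * d0 j.val * border Qt (Fin.cast hcast i) (Fin.cast hcast j) := by
    intro i j
    by_cases hi : (i : ℕ) < n - 1
    · by_cases hj : (j : ℕ) < n - 1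
      · have hB : border Qt (Fin.cast hcast i) (Fin.cast hcast j) = Qt ⟨i, hi⟩ ⟨j, hj⟩ := by
          simp [border, hi, hj]
        rw [hB, hd0lt i.val hi, hd0lt j.val hj, hQt ⟨i, hi⟩ ⟨j, hj⟩, hQ, hQ, hQ]
        have hei : (⟨(i : ℕ), by omega⟩ : Fin n) = i := Fin.eta i _
        have hej : (⟨(j : ℕ), by omega⟩ : Fin n) = j := Fin.eta j _
        rw [hei, hej]
        have hai : q i - q N ≠ 0 := ne_of_gt (hpos i hi)
        have haj : q j - q N ≠ 0 := ne_of_gt (hpos j hj)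
        rw [← fmul, ← fmul]
        have hz : (q i - q N) * (q j - q N) *
            ((q j - q N)⁻¹ - (q i - q N)⁻¹) = q i - q j := by
          field_simp
          ring
        rw [hz]
      · have hjN : j = N := Fin.ext (by have := j.isLt; simp [hN]; omega)
        have hB : border Qt (Fin.cast hcast i) (Fin.cast hcast j) = 1 := by
          simp [border, hi, hjN, hN]
        rw [hB, hd0lt i.val hi]
        have hdj : d0 j.val = 1 := by rw [hjN]; simpa [hN] using hd0N
        rw [hdj]
        have hei : (⟨(i : ℕ), by omega⟩ : Fin n) = i := Fin.eta i _
        rw [hei, hjN]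
        ring
    · have hiN : i = N := Fin.ext (by have := i.isLt; simp [hN]; omega)
      have hdi : d0 i.val = 1 := by rw [hiN]; simpa [hN] using hd0N
      by_cases hj : (j : ℕ) < n - 1
      · have hB : border Qt (Fin.cast hcast i) (Fin.cast hcast j) = -1 := by
          simp [border, hi, hj]
        rw [hB, hdi, hd0lt j.val hj]
        have hej : (⟨(j : ℕ), by omega⟩ : Fin n) = j := Fin.eta j _
        rw [hej, hiN, hQ, hQ, abs_sub_comm]
        ring
      · have hjN : j = N := Fin.ext (by have := j.isLt; simp [hN]; omega)
        have hdj : d0 j.val = 1 := by rw [hjN]; simpa [hN] using hd0N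
        have hB : border Qt (Fin.cast hcast i) (Fin.cast hcast j) = 0 := by
          simp [border, hi, hj]
        rw [hB, hdi, hdj, hiN, hjN, hQ]
        simp
  have hPf1 : Pf Q = (∏ i : Fin n, d0 i.val) *
      Pf (fun i j : Fin n => border Qt (Fin.cast hcast i) (Fin.cast hcast j)) :=
    Pf_diag hne (fun i => d0 i.val) Q _ hpoint
  have hPf2 : Pf (fun i j : Fin n => border Qt (Fin.cast hcast i) (Fin.cast hcast j))
      = Pf (border Qt) := Pf_cast hcast (border Qt) _ (fun i j => rfl)
  have hprod : (∏ i : Fin n, d0 i.val)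
      = ∏ j : Fin (n - 1), Q ⟨j, by have := j.isLt; omega⟩ ⟨n - 1, by omega⟩ := by
    rw [Fin.prod_univ_eq_prod_range d0 n]
    rw [show Finset.range n = Finset.range ((n - 1) + 1) from by rw [← hcast],
      Finset.prod_range_succ, hd0N, mul_one]
    rw [← Fin.prod_univ_eq_prod_range d0 (n - 1)]
    refine Finset.prod_congr rfl fun j _ => ?_
    rw [hd0lt j.val j.isLt]
  refine ⟨?_, part2, part3⟩
  rw [hPf1, hPf2, hprod]
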